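/- Twist preserves invertibility and the braid relation: let R ∈ End(V⊗V) be an invertible solution of the Yang–Baxter equation and R̃ = τ(F)⁻¹ R F for invertible F satisfying the hypotheses of the twisting theorem (existence of invertible Φ, Ψ ∈ End(V^{⊗3}) with Φ F₁₂ = Ψ F₂₃, R₁₂ Φ = Φ^{(213)} R₁₂, R₂₃ Ψ = Ψ^{(132)} R₂₃). Then the braid operator R̂̃ := P R̃ satisfies the braid relation R̂̃₁₂ R̂̃₂₃ R̂̃₁₂ = R̂̃₂₃ R̂̃₁₂ R̂̃₂₃ in End(V⊗V⊗V), and R̂̃ = F⁻¹ R̂ F where R̂ = P R, i.e. twisting is a similarity transformation of braid matrices. -/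

import Mathlib

/-!
`R̂̃ = F⁻¹ R̂ F` because `P² = 1`. For the braid relation, `G = Φ F₁₂ = Ψ F₂₃` intertwines the
twisted and untwisted braid operators: `G R̂̃₁₂ = R̂₁₂ G` since `Φ` commutes with `R̂₁₂`, and
`G R̂̃₂₃ = R̂₂₃ G` since `Ψ` commutes with `R̂₂₃`. As `G` is left-cancellable, the braid relation
for `R̂` (the Yang–Baxter equation conjugated by flips) passes to `R̂̃`.
-/

open TensorProduct

noncomputable section
variable (k V : Type*) [Field k] [AddCommGroup V] [Module k V]

/-- The flip `P : V ⊗ V → V ⊗ V`. -/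
def flipE : Module.End k (V ⊗[k] V) := (TensorProduct.comm k V V).toLinearMap

/-- `τ(X) = P X P`. -/
def tauE (X : Module.End k (V ⊗[k] V)) : Module.End k (V ⊗[k] V) :=
  flipE k V * X * flipE k V

/-- The embedding `X ↦ X₂₃` into `End(V ⊗ V ⊗ V)`. -/
def leg23 (X : Module.End k (V ⊗[k] V)) : Module.End k (V ⊗[k] (V ⊗[k] V)) :=
  LinearMap.lTensor V X

/-- The embedding `X ↦ X₁₂` into `End(V ⊗ V ⊗ V)`. -/
def leg12 (X : Module.End k (V ⊗[k] V)) : Module.End k (V ⊗[k] (V ⊗[k] V)) :=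
  (TensorProduct.assoc k V V V).toLinearMap ∘ₗ LinearMap.rTensor V X ∘ₗ
    (TensorProduct.assoc k V V V).symm.toLinearMap

/-- The flip of factors 1 and 2. -/
def P12 : Module.End k (V ⊗[k] (V ⊗[k] V)) := leg12 k V (flipE k V)

/-- The flip of factors 2 and 3. -/
def P23 : Module.End k (V ⊗[k] (V ⊗[k] V)) := leg23 k V (flipE k V)

/-- The embedding `X ↦ X₁₃`. -/
def leg13 (X : Module.End k (V ⊗[k] V)) : Module.End k (V ⊗[k] (V ⊗[k] V)) :=
  P23 k V * leg12 k V X * P23 k V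

/-- The Yang–Baxter equation `R₁₂R₁₃R₂₃ = R₂₃R₁₃R₁₂`. -/
def YB (R : Module.End k (V ⊗[k] V)) : Prop :=
  leg12 k V R * leg13 k V R * leg23 k V R = leg23 k V R * leg13 k V R * leg12 k V R

section Monoid

variable {M : Type*} [Monoid M]

theorem mul_mul_eq_mul_mul_of_mul_eq {a b c d : M} (h : a * b = c * d) (t : M) :
    a * (b * t) = c * (d * t) := by
  rw [← mul_assoc, h, mul_assoc]

/-- With `p = P₁₂`, `q = P₂₃`, `a = R₁₂`, `b = R₂₃`, `c = R₁₃` this turns the Yang–Baxter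
equation into the braid relation for `R̂ = P R`. -/
theorem braid_of_yangBaxter {p q a b c : M} (hp : p * p = 1) (hq : q * q = 1)
    (hpq : p * q * p = q * p * q) (hqa : q * a * q = c) (hpb : p * b * p = c)
    (hYB : a * c * b = b * c * a) :
    p * a * (q * b) * (p * a) = q * b * (p * a) * (q * b) := by
  have aq : a * q = q * c := by rw [← hqa, ← mul_assoc, ← mul_assoc, hq, one_mul]
  have bp : b * p = p * c := by rw [← hpb, ← mul_assoc, ← mul_assoc, hp, one_mul]
  have cp : c * p = p * b := by rw [← hpb, mul_assoc, mul_assoc, hp, mul_one]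
  have cq : c * q = q * a := by rw [← hqa, mul_assoc, mul_assoc, hq, mul_one]
  calc p * a * (q * b) * (p * a) = p * q * p * (b * c * a) := by
        simp only [mul_assoc]
        rw [mul_mul_eq_mul_mul_of_mul_eq aq, mul_mul_eq_mul_mul_of_mul_eq bp,
          mul_mul_eq_mul_mul_of_mul_eq cp]
    _ = q * p * q * (a * c * b) := by rw [hpq, hYB]
    _ = q * b * (p * a) * (q * b) := by
        simp only [mul_assoc]
        rw [mul_mul_eq_mul_mul_of_mul_eq bp, mul_mul_eq_mul_mul_of_mul_eq aq,
          mul_mul_eq_mul_mul_of_mul_eq cq]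

theorem commute_mul_of_mul_eq_conj_mul {p a φ : M} (hp : p * p = 1)
    (h : a * φ = p * φ * p * a) : Commute (p * a) φ := by
  rw [Commute, SemiconjBy, mul_assoc, h, ← mul_assoc, ← mul_assoc, ← mul_assoc, hp, one_mul,
    mul_assoc]

theorem semiconjBy_conj_of_mul_eq_one {f f' : M} (hf : f * f' = 1) (b : M) :
    SemiconjBy f (f' * b * f) b := by
  rw [SemiconjBy, ← mul_assoc, ← mul_assoc, hf, one_mul]

theorem braid_of_semiconjBy {g x y b c : M} (hg : IsLeftRegular g) (hx : SemiconjBy g x b)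
    (hy : SemiconjBy g y c) (hbc : b * c * b = c * b * c) :
    x * y * x = y * x * y :=
  hg <| show g * (x * y * x) = g * (y * x * y) by
    rw [((hx.mul_right hy).mul_right hx).eq, hbc, ((hy.mul_right hx).mul_right hy).eq]

end Monoid

section Legs

theorem flipE_mul_flipE : flipE k V * flipE k V = 1 := by
  ext x y
  simp [flipE]

theorem leg12_mul (X Y : Module.End k (V ⊗[k] V)) :
    leg12 k V (X * Y) = leg12 k V X * leg12 k V Y := by
  apply TensorProduct.ext_threefold'
  intro x y z
  simp [leg12]

theorem leg12_one : leg12 k V 1 = 1 := by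
  apply TensorProduct.ext_threefold'
  intro x y z
  simp [leg12]

theorem leg23_mul (X Y : Module.End k (V ⊗[k] V)) :
    leg23 k V (X * Y) = leg23 k V X * leg23 k V Y :=
  LinearMap.lTensor_mul V X Y

theorem leg23_one : leg23 k V 1 = 1 :=
  LinearMap.lTensor_id V (V ⊗[k] V)

theorem P12_mul_P12 : P12 k V * P12 k V = 1 := by
  rw [P12, ← leg12_mul, flipE_mul_flipE, leg12_one]

theorem P23_mul_P23 : P23 k V * P23 k V = 1 := by
  rw [P23, ← leg23_mul, flipE_mul_flipE, leg23_one]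

theorem P12_P23_braid : P12 k V * P23 k V * P12 k V = P23 k V * P12 k V * P23 k V := by
  apply TensorProduct.ext_threefold'
  intro x y z
  simp [P12, P23, leg12, leg23, flipE]

theorem P23_mul_P12_tmul (x : V) (t : V ⊗[k] V) :
    (P23 k V * P12 k V) (x ⊗ₜ t) = TensorProduct.assoc k V V V (t ⊗ₜ x) := by
  induction t using TensorProduct.induction_on with
  | zero => simp
  | tmul y z => simp [P12, P23, leg12, leg23, flipE]
  | add t₁ t₂ h₁ h₂ => simp only [tmul_add, add_tmul, map_add, h₁, h₂]

theorem P23_mul_P12_mul_leg23 (X : Module.End k (V ⊗[k] V)) :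
    P23 k V * P12 k V * leg23 k V X = leg12 k V X * (P23 k V * P12 k V) := by
  apply TensorProduct.ext'
  intro x t
  rw [Module.End.mul_apply (P23 k V * P12 k V), Module.End.mul_apply (leg12 k V X), leg23,
    LinearMap.lTensor_tmul, P23_mul_P12_tmul, P23_mul_P12_tmul]
  simp [leg12]

theorem P12_mul_leg23_mul_P12 (X : Module.End k (V ⊗[k] V)) :
    P12 k V * leg23 k V X * P12 k V = leg13 k V X := by
  calc P12 k V * leg23 k V X * P12 k V
      = P23 k V * (P23 k V * P12 k V * leg23 k V X) * P12 k V := by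
        simp only [← mul_assoc, P23_mul_P23, one_mul]
    _ = leg13 k V X := by
        rw [P23_mul_P12_mul_leg23, leg13]
        simp only [mul_assoc, P12_mul_P12, mul_one]

end Legs

theorem twist_braid_relation
    (R F F' : Module.End k (V ⊗[k] V))
    (Φ Φ' Ψ : Module.End k (V ⊗[k] (V ⊗[k] V)))
    (hF : F * F' = 1) (hF' : F' * F = 1)
    (hΦ' : Φ' * Φ = 1)
    (hYB : YB k V R)
    (cond1 : Φ * leg12 k V F = Ψ * leg23 k V F)
    (cond2 : leg12 k V R * Φ = (P12 k V * Φ * P12 k V) * leg12 k V R)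
    (cond3 : leg23 k V R * Ψ = (P23 k V * Ψ * P23 k V) * leg23 k V R) :
    (leg12 k V (flipE k V * (tauE k V F' * R * F)) *
        leg23 k V (flipE k V * (tauE k V F' * R * F)) *
        leg12 k V (flipE k V * (tauE k V F' * R * F)) =
      leg23 k V (flipE k V * (tauE k V F' * R * F)) *
        leg12 k V (flipE k V * (tauE k V F' * R * F)) *
        leg23 k V (flipE k V * (tauE k V F' * R * F))) ∧
    flipE k V * (tauE k V F' * R * F) = F' * (flipE k V * R) * F := by
  have similarity : flipE k V * (tauE k V F' * R * F) = F' * (flipE k V * R) * F := by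
    simp only [tauE, ← mul_assoc, flipE_mul_flipE, one_mul]
  refine ⟨?_, similarity⟩
  have braid : P12 k V * leg12 k V R * (P23 k V * leg23 k V R) * (P12 k V * leg12 k V R) =
      P23 k V * leg23 k V R * (P12 k V * leg12 k V R) * (P23 k V * leg23 k V R) :=
    braid_of_yangBaxter (P12_mul_P12 k V) (P23_mul_P23 k V) (P12_P23_braid k V) rfl
      (P12_mul_leg23_mul_P12 k V R) hYB
  have regular : IsLeftRegular (Φ * leg12 k V F) :=
    (isLeftRegular_of_mul_eq_one hΦ').mul
      (isLeftRegular_of_mul_eq_one (by rw [← leg12_mul, hF', leg12_one]))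
  have intertwine₁₂ := SemiconjBy.mul_left
    (commute_mul_of_mul_eq_conj_mul (P12_mul_P12 k V) cond2).symm
    (semiconjBy_conj_of_mul_eq_one (by rw [← leg12_mul, hF, leg12_one]) (P12 k V * leg12 k V R))
  have intertwine₂₃ := SemiconjBy.mul_left
    (commute_mul_of_mul_eq_conj_mul (P23_mul_P23 k V) cond3).symm
    (semiconjBy_conj_of_mul_eq_one (by rw [← leg23_mul, hF, leg23_one]) (P23 k V * leg23 k V R))
  rw [← cond1] at intertwine₂₃
  rw [similarity]
  simp only [leg12_mul, leg23_mul]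
  exact braid_of_semiconjBy regular intertwine₁₂ intertwine₂₃ braid
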